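/- For n ∈ ℕ and 0 ≤ k ≤ n/2, the sum ∑_{i=0}^{k} C(n,i) is at most 2^{n·H(k/n)}, where H(p) = -p·log₂(p) - (1-p)·log₂(1-p) is the binary entropy function. -/

import Mathlib

/-- The binary entropy function `H(p) = -p log₂ p - (1-p) log₂ (1-p)`
(with the convention `H(0) = H(1) = 0`, which holds automatically since
`Real.logb 2 0 = 0` in Lean). -/
noncomputable def binEntropy (p : ℝ) : ℝ :=
  -p * Real.logb 2 p - (1 - p) * Real.logb 2 (1 - p)

/-!
With `p = k / n ≤ 1/2` the weight `p ^ i * (1 - p) ^ (n - i)` decreases in `i`, so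
`C(n, i) * p ^ k * (1 - p) ^ (n - k)` is at most the `i`-th term of the binomial expansion of
`(p + (1 - p)) ^ n = 1` for every `i ≤ k`. Finally `p ^ k * (1 - p) ^ (n - k) = 2 ^ (-n H(p))`.
-/

open Finset

section Binomial

variable {R : Type*} [CommSemiring R] [PartialOrder R] [IsOrderedRing R] {a b : R}

theorem pow_mul_pow_sub_le_of_le (ha : 0 ≤ a) (hab : a ≤ b) {i k n : ℕ} (hik : i ≤ k)
    (hkn : k ≤ n) : a ^ k * b ^ (n - k) ≤ a ^ i * b ^ (n - i) := by
  obtain ⟨j, rfl⟩ := Nat.exists_eq_add_of_le hik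
  have hni : n - i = j + (n - (i + j)) := by omega
  rw [hni, pow_add, pow_add, mul_assoc]
  have hb : 0 ≤ b := ha.trans hab
  gcongr

theorem sum_range_choose_mul_pow_mul_pow_sub_le (ha : 0 ≤ a) (hab : a ≤ b) {k n : ℕ}
    (hkn : k ≤ n) :
    (∑ i ∈ range (k + 1), (n.choose i : R)) * (a ^ k * b ^ (n - k)) ≤ (a + b) ^ n := by
  have hb : 0 ≤ b := ha.trans hab
  calc (∑ i ∈ range (k + 1), (n.choose i : R)) * (a ^ k * b ^ (n - k))
      ≤ ∑ i ∈ range (k + 1), a ^ i * b ^ (n - i) * n.choose i := by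
        rw [sum_mul]
        refine sum_le_sum fun i hi => ?_
        rw [mul_comm]
        exact mul_le_mul_of_nonneg_right
          (pow_mul_pow_sub_le_of_le ha hab (Nat.lt_succ_iff.mp (mem_range.mp hi)) hkn)
          (Nat.cast_nonneg _)
    _ ≤ ∑ i ∈ range (n + 1), a ^ i * b ^ (n - i) * n.choose i :=
        sum_le_sum_of_subset_of_nonneg (range_subset_range.mpr (by omega))
          fun _ _ _ => by positivity
    _ = (a + b) ^ n := (add_pow a b n).symm

end Binomial

theorem two_rpow_mul_binEntropy {p : ℝ} (hp0 : 0 < p) (hp1 : p < 1) (x : ℝ) :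
    (2 : ℝ) ^ (x * binEntropy p) = (p ^ (x * p) * (1 - p) ^ (x * (1 - p)))⁻¹ := by
  have h1p : 0 < 1 - p := sub_pos.mpr hp1
  have hexp : x * binEntropy p =
      -(Real.logb 2 p * (x * p) + Real.logb 2 (1 - p) * (x * (1 - p))) := by
    unfold binEntropy; ring
  rw [hexp, Real.rpow_neg zero_le_two, Real.rpow_add two_pos, Real.rpow_mul zero_le_two,
    Real.rpow_mul zero_le_two, Real.rpow_logb two_pos one_lt_two.ne' hp0,
    Real.rpow_logb two_pos one_lt_two.ne' h1p]

theorem sum_choose_le_two_rpow_entropy (n k : ℕ) (hk : (k : ℝ) ≤ n / 2) :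
    (∑ i ∈ Finset.range (k + 1), (n.choose i : ℝ)) ≤
      (2 : ℝ) ^ ((n : ℝ) * binEntropy ((k : ℝ) / n)) := by
  rcases Nat.eq_zero_or_pos k with rfl | hk0
  · simp [binEntropy]
  have hk0' : (0 : ℝ) < k := Nat.cast_pos.mpr hk0
  have hn : (0 : ℝ) < n := by linarith
  have hkn : k ≤ n := by exact_mod_cast (show (k : ℝ) ≤ n by linarith)
  set p : ℝ := k / n with hp
  have hp0 : 0 < p := div_pos hk0' hn
  have hp_half : p ≤ 1 / 2 := by rw [hp, div_le_iff₀ hn]; linarith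
  have h1p : 0 < 1 - p := by linarith
  have hnp : (n : ℝ) * p = k := by rw [hp]; field_simp
  have hnq : (n : ℝ) * (1 - p) = ((n - k : ℕ) : ℝ) := by
    rw [Nat.cast_sub hkn, mul_sub, hnp, mul_one]
  have hweight : (2 : ℝ) ^ ((n : ℝ) * binEntropy p) = (p ^ k * (1 - p) ^ (n - k))⁻¹ := by
    rw [two_rpow_mul_binEntropy hp0 (sub_pos.mp h1p), hnp, hnq, Real.rpow_natCast,
      Real.rpow_natCast]
  rw [hweight, ← one_div, le_div_iff₀ (by positivity)]
  simpa only [add_sub_cancel, one_pow] using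
    sum_range_choose_mul_pow_mul_pow_sub_le hp0.le (by linarith : p ≤ 1 - p) hkn
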